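/- The rings R₁ = (ℤ/2)⟨A, X⟩/⟨1 + AX⟩ and R₂ = (ℤ/2)⟨a, x, b₁, b₂⟩/⟨1 + (1+b₂b₁)a, 1 + a(1+b₂b₁)⟩ are not isomorphic as rings. -/

import Mathlib

/-!
A ring isomorphism `R₁ ≃ R₂` would induce a bijection between the ring maps `R₁ → 𝔽₂` and
`R₂ → 𝔽₂`. Since `AX = 1`, every ring map `R₁ → 𝔽₂` sends `A` and `X` to units, i.e. to `1`,
so there is only one. On the other hand `a ↦ 1, b₁, b₂ ↦ 0` satisfies the relations of `R₂`
whatever the image of `x` is, which gives two different ring maps `R₂ → 𝔽₂`.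
-/

open FreeAlgebra

/-- The free noncommutative unital algebra over ℤ/2 on generators A, X. -/
abbrev F1 : Type := FreeAlgebra (ZMod 2) (Fin 2)

/-- The relation 1 + AX = 0 (i.e. AX = 1). -/
inductive Rel1 : F1 → F1 → Prop
  | r : Rel1 (1 + ι (ZMod 2) 0 * ι (ZMod 2) 1) 0

/-- R₁ = (ℤ/2)⟨A, X⟩ / ⟨1 + AX⟩. -/
abbrev Ring1 : Type := RingQuot Rel1

/-- The free noncommutative unital algebra over ℤ/2 on generators a, x, b₁, b₂. -/
abbrev F2 : Type := FreeAlgebra (ZMod 2) (Fin 4)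

/-- The relations 1 + (1 + b₂b₁)a = 0 and 1 + a(1 + b₂b₁) = 0. -/
inductive Rel2 : F2 → F2 → Prop
  | r1 : Rel2 (1 + (1 + ι (ZMod 2) 3 * ι (ZMod 2) 2) * ι (ZMod 2) 0) 0
  | r2 : Rel2 (1 + ι (ZMod 2) 0 * (1 + ι (ZMod 2) 3 * ι (ZMod 2) 2)) 0

/-- R₂ = (ℤ/2)⟨a, x, b₁, b₂⟩ / ⟨1 + (1+b₂b₁)a, 1 + a(1+b₂b₁)⟩. -/
abbrev Ring2 : Type := RingQuot Rel2

theorem FreeAlgebra.ringHom_ext {R X S : Type*} [CommSemiring R] [Semiring S]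
    [Subsingleton (R →+* S)] {f g : FreeAlgebra R X →+* S}
    (h : ∀ x, f (ι R x) = g (ι R x)) : f = g := by
  ext w
  induction w using FreeAlgebra.induction with
  | grade0 r =>
    exact RingHom.congr_fun
      (Subsingleton.elim (f.comp (algebraMap R _)) (g.comp (algebraMap R _))) r
  | grade1 x => exact h x
  | mul u v hu hv => simp only [map_mul, hu, hv]
  | add u v hu hv => simp only [map_add, hu, hv]

theorem RingEquiv.isEmpty_of_ringHom {R S T : Type*} [NonAssocSemiring R]
    [NonAssocSemiring S] [NonAssocSemiring T] [Subsingleton (R →+* T)]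
    [Nontrivial (S →+* T)] : IsEmpty (R ≃+* S) := by
  refine ⟨fun e => not_subsingleton (S →+* T) ?_⟩
  exact Function.Injective.subsingleton (f := fun g : S →+* T => g.comp (e : R →+* S))
    fun g₁ g₂ h => (RingHom.cancel_right e.surjective).mp h

theorem ZMod.eq_one_of_one_add_mul_eq_zero {u v : ZMod 2} (h : 1 + u * v = 0) :
    u = 1 ∧ v = 1 := by
  revert u v; decide

theorem Ring1.ringHom_apply_generator (f : Ring1 →+* ZMod 2) (i : Fin 2) :
    f (RingQuot.mkRingHom Rel1 (ι (ZMod 2) i)) = 1 := by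
  have hrel := congrArg f (RingQuot.mkRingHom_rel Rel1.r)
  simp only [map_add, map_mul, map_one, map_zero] at hrel
  obtain ⟨hA, hX⟩ := ZMod.eq_one_of_one_add_mul_eq_zero hrel
  fin_cases i
  exacts [hA, hX]

instance : Subsingleton (Ring1 →+* ZMod 2) :=
  ⟨fun f g => RingQuot.ringQuot_ext f g <| FreeAlgebra.ringHom_ext fun i => by
    simp only [RingHom.comp_apply, Ring1.ringHom_apply_generator]⟩

/-- `a ↦ 1`, `x ↦ c`, `b₁, b₂ ↦ 0` -/
noncomputable def Ring2.toZModTwo (c : ZMod 2) : Ring2 →+* ZMod 2 :=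
  RingQuot.lift ⟨(FreeAlgebra.lift (ZMod 2) ![1, c, 0, 0]).toRingHom, by
    rintro _ _ (_ | _) <;>
      simp only [AlgHom.toRingHom_eq_coe, RingHom.coe_coe, map_add, map_one, map_mul, map_zero,
        lift_ι_apply, Matrix.cons_val, Matrix.cons_val_zero, mul_zero, add_zero, mul_one] <;>
      decide⟩

theorem Ring2.toZModTwo_x (c : ZMod 2) :
    Ring2.toZModTwo c (RingQuot.mkRingHom Rel2 (ι (ZMod 2) 1)) = c := by
  simp [Ring2.toZModTwo, RingQuot.lift_mkRingHom_apply]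

instance : Nontrivial (Ring2 →+* ZMod 2) :=
  ⟨⟨Ring2.toZModTwo 0, Ring2.toZModTwo 1, fun h => by
    simpa [Ring2.toZModTwo_x] using RingHom.congr_fun h (RingQuot.mkRingHom Rel2 (ι (ZMod 2) 1))⟩⟩

/-- The rings R₁ and R₂ are not isomorphic as rings. -/
theorem stmt2 : IsEmpty (Ring1 ≃+* Ring2) :=
  RingEquiv.isEmpty_of_ringHom (T := ZMod 2)
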